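/- arXiv:2301.06656 — 5 statements merged into one kernel-verified Lean document; each statement's English description precedes it below -/
import Mathlib

section
/- Let γ > 0 and let f be continuous on the closed horizontal strip S_[0,γ] = {z ∈ ℂ : 0 ≤ Im z ≤ γ} and analytic on its interior. Suppose that for some p with 1 ≤ p < ∞ one has sup_{b ∈ [0,γ]} (∫_ℝ |f(x+ib)|^p dx)^{1/p} < ∞. Then there exists a strictly increasing sequence (n_j) of natural numbers such that for every b ∈ [0,γ], lim_{j→∞} ∫_{-n_j}^{n_j} (f(x+ib) − f(x)) dx = 0. In particular, when p = 1, for every b ∈ [0,γ] one has ∫_ℝ f(x+ib) dx = ∫_ℝ f(x) dx. -/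
open MeasureTheory Filter Set Function
open scoped Topology ENNReal

/-!
Let `V x = ∫_{[0,γ]} |f(x + it)|^p dt`. By Tonelli and the uniform bound on the lines, `V` is
integrable on `ℝ`, so on each `[n, n+1)` it takes a value at most its mean there, at some `R n`;
likewise for `V (-x)` at some `S n`, and `V (R n)`, `V (-S n)` tend to zero. By Hölder the vertical
sides of the rectangle `[-S n, R n] × [0, b]` then contribute `o(1)`, and so do the horizontal
pieces `[n, R n]`, `[-S n, -n]`, since the `Lᵖ` tails of each line vanish. Cauchy's theorem on these
rectangles gives the claim with `n j = j`. For `p = 1` the lines are integrable, so the limit is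
the difference of the two line integrals.
-/

theorem pairwise_disjoint_Ico_natCast (α : Type*) [Ring α] [PartialOrder α] [IsOrderedRing α] :
    Pairwise (Disjoint on fun n : ℕ => Ico (n : α) (n + 1)) :=
  fun m n hmn => by simpa [onFun] using pairwise_disjoint_Ico_intCast α (Nat.cast_injective.ne hmn)

theorem pairwise_disjoint_Ioc_natCast (α : Type*) [Ring α] [PartialOrder α] [IsOrderedRing α] :
    Pairwise (Disjoint on fun n : ℕ => Ioc (n : α) (n + 1)) :=
  fun m n hmn => by simpa [onFun] using pairwise_disjoint_Ioc_intCast α (Nat.cast_injective.ne hmn)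

section Lp

variable {α E : Type*} [MeasurableSpace α] {μ : Measure α} [NormedAddCommGroup E]

theorem lintegral_rpow_enorm_le_of_eLpNorm_ofReal_le {F : α → E} {p : ℝ} {C : ℝ≥0∞} (hp : 0 < p)
    (h : eLpNorm F (ENNReal.ofReal p) μ ≤ C) : ∫⁻ x, ‖F x‖ₑ ^ p ∂μ ≤ C ^ p := by
  rw [eLpNorm_eq_eLpNorm' (ENNReal.ofReal_pos.2 hp).ne' ENNReal.ofReal_ne_top,
    ENNReal.toReal_ofReal hp.le] at h
  rw [lintegral_rpow_enorm_eq_rpow_eLpNorm' hp]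
  exact ENNReal.rpow_le_rpow h hp.le

theorem tendsto_setLIntegral_zero_of_pairwise_disjoint {s : ℕ → Set α}
    (hs : ∀ n, MeasurableSet (s n)) (hd : Pairwise (Disjoint on s)) {v : α → ℝ≥0∞}
    (hv : ∫⁻ x, v x ∂μ ≠ ∞) : Tendsto (fun n => ∫⁻ x in s n, v x ∂μ) atTop (𝓝 0) := by
  refine ENNReal.tendsto_atTop_zero_of_tsum_ne_top (ne_top_of_le_ne_top hv ?_)
  rw [← lintegral_iUnion hs hd]
  exact setLIntegral_le_lintegral _ _

theorem tendsto_eLpNorm'_restrict_zero_of_pairwise_disjoint {s : ℕ → Set α}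
    (hs : ∀ n, MeasurableSet (s n)) (hd : Pairwise (Disjoint on s)) {φ : α → E} {p : ℝ}
    (hp : 0 < p) (hφ : ∫⁻ x, ‖φ x‖ₑ ^ p ∂μ ≠ ∞) :
    Tendsto (fun n => eLpNorm' φ p (μ.restrict (s n))) atTop (𝓝 0) := by
  simp_rw [eLpNorm'_eq_lintegral_enorm]
  simpa [ENNReal.zero_rpow_of_pos (inv_pos.2 hp)] using
    (tendsto_setLIntegral_zero_of_pairwise_disjoint hs hd hφ).ennrpow_const (1 / p)

theorem enorm_setIntegral_le_eLpNorm'_mul [NormedSpace ℝ E] {φ : α → E} {s t : Set α} {p : ℝ}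
    (hts : t ⊆ s) (hp : 1 ≤ p) (hφ : AEStronglyMeasurable φ (μ.restrict s)) :
    ‖∫ x in t, φ x ∂μ‖ₑ ≤ eLpNorm' φ p (μ.restrict s) * μ s ^ (1 - 1 / p) :=
  calc ‖∫ x in t, φ x ∂μ‖ₑ ≤ ∫⁻ x in t, ‖φ x‖ₑ ∂μ := enorm_integral_le_lintegral_enorm _
    _ ≤ ∫⁻ x in s, ‖φ x‖ₑ ∂μ := lintegral_mono_set hts
    _ = eLpNorm' φ 1 (μ.restrict s) := by simp [eLpNorm'_eq_lintegral_enorm]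
    _ ≤ _ := by
      simpa using eLpNorm'_le_eLpNorm'_mul_rpow_measure_univ one_pos hp hφ

theorem tendsto_setIntegral_zero_of_tendsto_eLpNorm' [NormedSpace ℝ E] {φ : ℕ → α → E}
    {s t : ℕ → Set α} {p : ℝ} {K : ℝ≥0∞} (hts : ∀ n, t n ⊆ s n) (hK : ∀ n, μ (s n) ≤ K)
    (hK_top : K ≠ ∞) (hp : 1 ≤ p) (hφ : ∀ n, AEStronglyMeasurable (φ n) (μ.restrict (s n)))
    (h : Tendsto (fun n => eLpNorm' (φ n) p (μ.restrict (s n))) atTop (𝓝 0)) :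
    Tendsto (fun n => ∫ x in t n, φ n x ∂μ) atTop (𝓝 0) := by
  have hexp : 0 ≤ 1 - 1 / p := sub_nonneg.2 ((div_le_one (by linarith)).2 hp)
  have hbound := ENNReal.Tendsto.mul_const h (Or.inr (ENNReal.rpow_ne_top_of_nonneg hexp hK_top))
  rw [zero_mul] at hbound
  refine tendsto_zero_iff_enorm_tendsto_zero.2 <|
    tendsto_of_tendsto_of_tendsto_of_le_of_le tendsto_const_nhds hbound (fun _ => zero_le)
      fun n => (enorm_setIntegral_le_eLpNorm'_mul (hts n) hp (hφ n)).trans ?_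
  gcongr
  exact hK n

end Lp

theorem exists_seq_mem_Ico_tendsto_zero {v : ℝ → ℝ≥0∞} (hv_meas : AEMeasurable v)
    (hv : ∫⁻ x, v x ≠ ∞) :
    ∃ R : ℕ → ℝ, (∀ n : ℕ, R n ∈ Ico (n : ℝ) (n + 1)) ∧ Tendsto (fun n => v (R n)) atTop (𝓝 0) := by
  have hvol (n : ℕ) : volume (Ico (n : ℝ) (n + 1)) = 1 := by simp
  choose R hR hle using fun n : ℕ =>
    exists_le_setLAverage (s := Ico (n : ℝ) (n + 1)) (by simp [hvol]) (by simp [hvol])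
      hv_meas.restrict
  refine ⟨R, hR, tendsto_of_tendsto_of_tendsto_of_le_of_le tendsto_const_nhds
    (tendsto_setLIntegral_zero_of_pairwise_disjoint (fun n => measurableSet_Ico)
      (pairwise_disjoint_Ico_natCast ℝ) hv) (fun _ => zero_le) fun n => ?_⟩
  simpa [setLAverage_eq, hvol] using hle n

section Horizontal

variable {E : Type*} [NormedAddCommGroup E] [NormedSpace ℝ E] {D : ℝ → E} {p : ℝ}

theorem tendsto_intervalIntegral_natCast_zero (hp : 1 ≤ p) (hD : AEStronglyMeasurable D)
    (hD_fin : ∫⁻ x, ‖D x‖ₑ ^ p ≠ ∞) {c : ℕ → ℝ} (hc : ∀ n : ℕ, c n ∈ Icc (n : ℝ) (n + 1)) :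
    Tendsto (fun n : ℕ => ∫ x in (n : ℝ)..c n, D x) atTop (𝓝 0) := by
  refine (tendsto_setIntegral_zero_of_tendsto_eLpNorm' (φ := fun _ => D)
    (s := fun n : ℕ => Ioc (n : ℝ) (n + 1)) (fun n => Ioc_subset_Ioc_right (hc n).2)
    (fun n => by simp) ENNReal.one_ne_top hp (fun _ => hD.restrict)
    (tendsto_eLpNorm'_restrict_zero_of_pairwise_disjoint (fun _ => measurableSet_Ioc)
      (pairwise_disjoint_Ioc_natCast ℝ) (by linarith) hD_fin)).congr fun n => ?_
  exact (intervalIntegral.integral_of_le (hc n).1).symm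

theorem tendsto_intervalIntegral_tails_zero (hp : 1 ≤ p) (hD : AEStronglyMeasurable D)
    (hD_fin : ∫⁻ x, ‖D x‖ₑ ^ p ≠ ∞) {R S : ℕ → ℝ} (hR : ∀ n : ℕ, R n ∈ Icc (n : ℝ) (n + 1))
    (hS : ∀ n : ℕ, S n ∈ Icc (n : ℝ) (n + 1)) :
    Tendsto (fun n : ℕ => (∫ x in -S n..-(n : ℝ), D x) + ∫ x in (n : ℝ)..R n, D x)
      atTop (𝓝 0) := by
  have hD_neg_fin : ∫⁻ x, ‖D (-x)‖ₑ ^ p ≠ ∞ := by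
    rwa [lintegral_neg_eq_self (fun x => ‖D x‖ₑ ^ p)]
  have hleft := (tendsto_intervalIntegral_natCast_zero hp
    (hD.comp_measurePreserving (Measure.measurePreserving_neg volume)) hD_neg_fin hS).congr
    fun n => intervalIntegral.integral_comp_neg _
  simpa using hleft.add (tendsto_intervalIntegral_natCast_zero hp hD hD_fin hR)

end Horizontal

theorem intervalIntegral_eq_sub_add {E : Type*} [NormedAddCommGroup E] [NormedSpace ℝ E]
    {g : ℝ → E} (hg : Continuous g) (a b c d : ℝ) :
    ∫ x in b..c, g x = (∫ x in a..d, g x) - ((∫ x in a..b, g x) + ∫ x in c..d, g x) := by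
  rw [← intervalIntegral.integral_add_adjacent_intervals (hg.intervalIntegrable a b)
      (hg.intervalIntegrable b d),
    ← intervalIntegral.integral_add_adjacent_intervals (hg.intervalIntegrable b c)
      (hg.intervalIntegrable c d)]
  abel

section Strip

variable {f : ℂ → ℂ} {γ p : ℝ}

theorem continuousOn_comp_add_mul_I (hf : ContinuousOn f (Complex.im ⁻¹' Icc 0 γ)) :
    ContinuousOn (fun z : ℝ × ℝ => f (z.1 + z.2 * Complex.I)) (univ ×ˢ Icc 0 γ) :=
  hf.comp (by fun_prop) fun z hz => by simpa using hz.2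

theorem continuous_horizontal_line (hf : ContinuousOn f (Complex.im ⁻¹' Icc 0 γ)) {b : ℝ}
    (hb : b ∈ Icc 0 γ) : Continuous fun x : ℝ => f (x + b * Complex.I) :=
  (continuousOn_comp_add_mul_I hf).comp_continuous (Continuous.prodMk_left b) fun _ =>
    ⟨trivial, hb⟩

theorem continuousOn_vertical_line (hf : ContinuousOn f (Complex.im ⁻¹' Icc 0 γ)) (c : ℝ) :
    ContinuousOn (fun t : ℝ => f (c + t * Complex.I)) (Icc 0 γ) :=
  (continuousOn_comp_add_mul_I hf).comp (Continuous.prodMk_right c).continuousOn fun _ ht =>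
    ⟨trivial, ht⟩

theorem aemeasurable_enorm_rpow_comp_add_mul_I (hf : ContinuousOn f (Complex.im ⁻¹' Icc 0 γ))
    (p : ℝ) : AEMeasurable (fun z : ℝ × ℝ => ‖f (z.1 + z.2 * Complex.I)‖ₑ ^ p)
      (volume.prod (volume.restrict (Icc 0 γ))) := by
  have h := (continuousOn_comp_add_mul_I hf).aemeasurable (μ := volume.prod volume)
    (MeasurableSet.univ.prod measurableSet_Icc)
  rw [← Measure.prod_restrict, Measure.restrict_univ] at h
  exact h.enorm.pow_const p

theorem lintegral_lintegral_Icc_le (hf : ContinuousOn f (Complex.im ⁻¹' Icc 0 γ))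
    {C : ℝ≥0∞} (hC : ∀ t ∈ Icc 0 γ, ∫⁻ x : ℝ, ‖f (x + t * Complex.I)‖ₑ ^ p ≤ C) :
    ∫⁻ x : ℝ, ∫⁻ t in Icc 0 γ, ‖f (x + t * Complex.I)‖ₑ ^ p ≤ ENNReal.ofReal γ * C :=
  calc ∫⁻ x : ℝ, ∫⁻ t in Icc 0 γ, ‖f (x + t * Complex.I)‖ₑ ^ p
      = ∫⁻ t in Icc 0 γ, ∫⁻ x : ℝ, ‖f (x + t * Complex.I)‖ₑ ^ p :=
        lintegral_lintegral_swap (aemeasurable_enorm_rpow_comp_add_mul_I hf p)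
    _ ≤ ∫⁻ _ in Icc 0 γ, C := setLIntegral_mono' measurableSet_Icc hC
    _ = ENNReal.ofReal γ * C := by simp [mul_comm]

theorem intervalIntegral_horizontal_sub_eq_vertical (hf : ContinuousOn f (Complex.im ⁻¹' Icc 0 γ))
    (hf' : DifferentiableOn ℂ f (Complex.im ⁻¹' Ioo 0 γ)) {b : ℝ} (hb : b ∈ Icc 0 γ) (a c : ℝ) :
    ∫ x in a..c, (f (x + b * Complex.I) - f x) =
      Complex.I * (∫ y in 0..b, f (c + y * Complex.I)) -
        Complex.I * ∫ y in 0..b, f (a + y * Complex.I) := by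
  have hrect := Complex.integral_boundary_rect_eq_zero_of_continuousOn_of_differentiableOn f
    ⟨a, 0⟩ ⟨c, b⟩ (hf.mono fun z hz => Icc_subset_Icc_right hb.2 (uIcc_of_le hb.1 ▸ hz.2))
    (hf'.mono fun z hz => by
      have := hz.2
      simp only [min_eq_left hb.1, max_eq_right hb.1] at this
      exact Ioo_subset_Ioo_right hb.2 this)
  have h0 := continuous_horizontal_line hf ⟨le_rfl, hb.1.trans hb.2⟩
  simp only [Complex.ofReal_zero, zero_mul, add_zero, smul_eq_mul] at hrect h0
  rw [intervalIntegral.integral_sub ((continuous_horizontal_line hf hb).intervalIntegrable _ _)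
    (h0.intervalIntegrable _ _)]
  linear_combination -hrect

theorem tendsto_intervalIntegral_vertical_zero (hf : ContinuousOn f (Complex.im ⁻¹' Icc 0 γ))
    (hp : 1 ≤ p) {b : ℝ} (hb : b ∈ Icc 0 γ) {c : ℕ → ℝ}
    (hc : Tendsto (fun n => ∫⁻ t in Icc 0 γ, ‖f (c n + t * Complex.I)‖ₑ ^ p) atTop (𝓝 0)) :
    Tendsto (fun n => ∫ y in 0..b, f (c n + y * Complex.I)) atTop (𝓝 0) := by
  have hL : Tendsto (fun n => eLpNorm' (fun y : ℝ => f (c n + y * Complex.I)) p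
      (volume.restrict (Icc 0 γ))) atTop (𝓝 0) := by
    simpa [eLpNorm'_eq_lintegral_enorm, ENNReal.zero_rpow_of_pos (inv_pos.2 (by linarith : 0 < p))]
      using hc.ennrpow_const (1 / p)
  refine (tendsto_setIntegral_zero_of_tendsto_eLpNorm' (t := fun _ => Ioc (0 : ℝ) b)
    (K := ENNReal.ofReal γ) (fun _ => Ioc_subset_Icc_self.trans (Icc_subset_Icc_right hb.2))
    (fun _ => by simp) ENNReal.ofReal_ne_top hp
    (fun n => (continuousOn_vertical_line hf (c n)).aestronglyMeasurable measurableSet_Icc)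
    hL).congr fun n => ?_
  exact (intervalIntegral.integral_of_le hb.1).symm

theorem tendsto_intervalIntegral_sub_zero (hf : ContinuousOn f (Complex.im ⁻¹' Icc 0 γ))
    (hf' : DifferentiableOn ℂ f (Complex.im ⁻¹' Ioo 0 γ)) (hp : 1 ≤ p) {C : ℝ≥0∞}
    (hC_top : C ≠ ∞) (hC : ∀ t ∈ Icc 0 γ, ∫⁻ x : ℝ, ‖f (x + t * Complex.I)‖ₑ ^ p ≤ C) {b : ℝ}
    (hb : b ∈ Icc 0 γ) :
    Tendsto (fun n : ℕ => ∫ x in -(n : ℝ)..n, (f (x + b * Complex.I) - f x)) atTop (𝓝 0) := by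
  set V := fun x : ℝ => ∫⁻ t in Icc 0 γ, ‖f (x + t * Complex.I)‖ₑ ^ p
  have hV_meas : AEMeasurable V :=
    (aemeasurable_enorm_rpow_comp_add_mul_I hf p).lintegral_prod_right'
  have hV : ∫⁻ x, V x ≠ ∞ := ne_top_of_le_ne_top
    (ENNReal.mul_ne_top ENNReal.ofReal_ne_top hC_top) (lintegral_lintegral_Icc_le hf hC)
  obtain ⟨R, hR, hVR⟩ := exists_seq_mem_Ico_tendsto_zero hV_meas hV
  obtain ⟨S, hS, hVS⟩ := exists_seq_mem_Ico_tendsto_zero (v := fun x => V (-x))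
    (hV_meas.comp_quasiMeasurePreserving (Measure.measurePreserving_neg _).quasiMeasurePreserving)
    (by rwa [lintegral_neg_eq_self V])
  have hrect : Tendsto (fun n => ∫ x in -S n..R n, (f (x + b * Complex.I) - f x)) atTop (𝓝 0) := by
    simpa [intervalIntegral_horizontal_sub_eq_vertical hf hf' hb] using
      ((tendsto_intervalIntegral_vertical_zero hf hp hb hVR).const_mul Complex.I).sub
        ((tendsto_intervalIntegral_vertical_zero hf hp hb (c := fun n => -S n) hVS).const_mul
          Complex.I)
  have htails (t : ℝ) (ht : t ∈ Icc 0 γ) := tendsto_intervalIntegral_tails_zero hp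
    (continuous_horizontal_line hf ht).aestronglyMeasurable
    (ne_top_of_le_ne_top hC_top (hC t ht)) (fun n => Ico_subset_Icc_self (hR n))
    (fun n => Ico_subset_Icc_self (hS n))
  have h0 : (0 : ℝ) ∈ Icc 0 γ := ⟨le_rfl, hb.1.trans hb.2⟩
  have hFb := continuous_horizontal_line hf hb
  have hF0 : Continuous fun x : ℝ => f x := by simpa using continuous_horizontal_line hf h0
  have htails0 : Tendsto (fun n : ℕ => (∫ x in -S n..-(n : ℝ), f x) + ∫ x in (n : ℝ)..R n, f x)
      atTop (𝓝 0) := by simpa using htails 0 h0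
  have hlim := hrect.sub ((htails b hb).sub htails0)
  rw [sub_zero, sub_zero] at hlim
  refine hlim.congr fun n => ?_
  rw [intervalIntegral_eq_sub_add (g := fun x : ℝ => f (x + b * Complex.I) - f x) (hFb.sub hF0)
    (-S n) (-n) n (R n),
    intervalIntegral.integral_sub (hFb.intervalIntegrable (-S n) (-n)) (hF0.intervalIntegrable _ _),
    intervalIntegral.integral_sub (hFb.intervalIntegrable n (R n)) (hF0.intervalIntegrable _ _)]
  abel

end Strip

theorem integral_eq_of_tendsto_intervalIntegral_sub {E : Type*} [NormedAddCommGroup E]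
    [NormedSpace ℝ E] [CompleteSpace E] {F G : ℝ → E} (hF : Integrable F) (hG : Integrable G)
    (h : Tendsto (fun n : ℕ => ∫ x in -(n : ℝ)..n, (F x - G x)) atTop (𝓝 0)) :
    ∫ x, F x = ∫ x, G x := by
  rw [← sub_eq_zero, ← integral_sub hF hG]
  exact tendsto_nhds_unique (intervalIntegral_tendsto_integral (hF.sub hG)
    (tendsto_neg_atTop_atBot.comp tendsto_natCast_atTop_atTop) tendsto_natCast_atTop_atTop) h

theorem contour_shift_subsequence_general
    (γ : ℝ) (f : ℂ → ℂ)
    (hcont : ContinuousOn f {z : ℂ | 0 ≤ z.im ∧ z.im ≤ γ})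
    (hdiff : DifferentiableOn ℂ f {z : ℂ | 0 < z.im ∧ z.im < γ})
    (p : ℝ) (hp : 1 ≤ p)
    (hbound : ∃ C : ℝ≥0∞, C < ⊤ ∧ ∀ b ∈ Set.Icc (0:ℝ) γ,
      eLpNorm (fun x : ℝ => f (x + b * Complex.I)) (ENNReal.ofReal p) volume ≤ C) :
    ∃ n : ℕ → ℕ, StrictMono n ∧
      (∀ b ∈ Set.Icc (0:ℝ) γ,
        Tendsto (fun j : ℕ => ∫ x in (-(n j : ℝ))..(n j : ℝ),
          (f (x + b * Complex.I) - f x)) atTop (𝓝 0)) ∧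
      (p = 1 → ∀ b ∈ Set.Icc (0:ℝ) γ,
        ∫ x : ℝ, f (x + b * Complex.I) = ∫ x : ℝ, f x) := by
  obtain ⟨C, hC_top, hC⟩ := hbound
  have hp0 : 0 < p := by linarith
  have hlim (b : ℝ) (hb : b ∈ Icc 0 γ) :=
    tendsto_intervalIntegral_sub_zero hcont hdiff hp
      (ENNReal.rpow_ne_top_of_nonneg hp0.le hC_top.ne)
      (fun t ht => lintegral_rpow_enorm_le_of_eLpNorm_ofReal_le hp0 (hC t ht)) hb
  refine ⟨id, strictMono_id, hlim, ?_⟩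
  rintro rfl b hb
  have hint (t : ℝ) (ht : t ∈ Icc 0 γ) : Integrable fun x : ℝ => f (x + t * Complex.I) :=
    memLp_one_iff_integrable.1 ⟨(continuous_horizontal_line hcont ht).aestronglyMeasurable,
      by simpa using (hC t ht).trans_lt hC_top⟩
  exact integral_eq_of_tendsto_intervalIntegral_sub (hint b hb)
    (by simpa using hint 0 ⟨le_rfl, hb.1.trans hb.2⟩) (hlim b hb)

/-- Let `γ > 0` and let `f` be continuous on the closed horizontal strip
`S_[0,γ] = {z : 0 ≤ Im z ≤ γ}` and analytic on its interior. If for some `1 ≤ p < ∞` the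
`Lᵖ`-norms of the restrictions of `f` to the horizontal lines `Im z = b`, `b ∈ [0,γ]`,
are uniformly bounded, then there is a strictly increasing sequence `(n j)` of naturals
such that for every `b ∈ [0,γ]`,
`∫_{-n j}^{n j} (f (x + i b) - f x) dx → 0`. In particular, when `p = 1`, for every
`b ∈ [0,γ]` one has `∫_ℝ f (x + i b) dx = ∫_ℝ f x dx`. -/
theorem contour_shift_subsequence
    (γ : ℝ) (hγ : 0 < γ) (f : ℂ → ℂ)
    (hcont : ContinuousOn f {z : ℂ | 0 ≤ z.im ∧ z.im ≤ γ})
    (hdiff : DifferentiableOn ℂ f {z : ℂ | 0 < z.im ∧ z.im < γ})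
    (p : ℝ) (hp : 1 ≤ p)
    (hbound : ∃ C : ℝ≥0∞, C < ⊤ ∧ ∀ b ∈ Set.Icc (0:ℝ) γ,
      eLpNorm (fun x : ℝ => f (x + b * Complex.I)) (ENNReal.ofReal p) volume ≤ C) :
    ∃ n : ℕ → ℕ, StrictMono n ∧
      (∀ b ∈ Set.Icc (0:ℝ) γ,
        Tendsto (fun j : ℕ => ∫ x in (-(n j : ℝ))..(n j : ℝ),
          (f (x + b * Complex.I) - f x)) atTop (𝓝 0)) ∧
      (p = 1 → ∀ b ∈ Set.Icc (0:ℝ) γ,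
        ∫ x : ℝ, f (x + b * Complex.I) = ∫ x : ℝ, f x) :=
  contour_shift_subsequence_general γ f hcont hdiff p hp hbound
end

section
/- Let A, B, C be bounded linear operators on L²(ℝ,e). (1) Let Λ be a shifted Fourier multiplier operator with analytic zero-free multiplier m on S_(0,1), and suppose AΛf = ΛBf for all f ∈ D(Λ). Then Λ is injective, A maps the range of Λ into itself, and for every f ∈ D(Λ) one has B f = Λ^{-1} A Λ f; equivalently B Λ^{-1} g = Λ^{-1} A g for every g in the range of Λ. (2) Let Λ₁, Λ₂ be shifted Fourier multiplier operators with analytic zero-free multipliers m₁, m₂ on S_(0,1) satisfying the growth bound |m_i(ξ+i/2)| ≤ C_i e^{k_i|ξ|} (ξ ∈ ℝ) for some constants C_i, k_i > 0, and suppose AΛ₁ = Λ₁B on D(Λ₁) and BΛ₂ = Λ₂C on D(Λ₂). Let Λ₁₂ be the shifted Fourier multiplier operator with multiplier m₁·m₂. Then AΛ₁₂f = Λ₁₂Cf for every f ∈ D(Λ₁₂) = {f ∈ L²(ℝ,e) : m₁(·+i/2)m₂(·+i/2)·𝓕^e_f ∈ L²(ℝ)}. -/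
/-!
Part (1) is the injectivity of multiplication by `m(·+i/2)`, which vanishes nowhere on the
line `Im z = 1/2`. For part (2), cut `𝓕^e_f` and `𝓕^e_g` off to the frequencies where
`|m₂(·+i/2)| ≤ n`. The cut-off `f` lies in `D(Λ₂)`, so there `Λ₁₂ = Λ₁Λ₂` and the two
intertwining relations chain to `AΛ₁₂ = Λ₁₂C`. As `n → ∞` the cut-offs converge in `L²`, and
the graph of a multiplication operator is closed (pass to an a.e. convergent subsequence), so
the relation survives in the limit.
-/

open MeasureTheory Filter Set
open scoped Topology ENNReal NNReal

/-- The weighted measure `e^x dx` on `ℝ`, so that `L²(ℝ,e)` is `L²` of this measure. -/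
noncomputable def expMeasure : Measure ℝ :=
  (volume : Measure ℝ).withDensity fun x => ENNReal.ofReal (Real.exp x)

/-- The Fourier integral `𝓕g(ξ) = (2π)^{-1/2} ∫ e^{-iξx} g(x) dx`. -/
noncomputable def fourierInt (g : ℝ → ℂ) (ξ : ℝ) : ℂ :=
  (Real.sqrt (2 * Real.pi) : ℂ)⁻¹ * ∫ x : ℝ, Complex.exp (-Complex.I * ξ * x) * g x

/-- Given a model `Fe` of the shifted Fourier transform `𝓕^e : L²(ℝ,e) → L²(ℝ)` and a
multiplier `m`, `IsMult Fe m f g` expresses the relation `g = Λ f` for the shifted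
Fourier multiplier operator `Λ` with multiplier `m`, i.e. `𝓕^e_g = m(·+i/2) ⬝ 𝓕^e_f` a.e.
(In particular it entails `f ∈ D(Λ)`, i.e. `m(·+i/2) ⬝ 𝓕^e_f ∈ L²(ℝ)`.) -/
def IsMult (Fe : Lp ℂ 2 expMeasure ≃ₗᵢ[ℂ] Lp ℂ 2 (volume : Measure ℝ))
    (m : ℂ → ℂ) (f g : Lp ℂ 2 expMeasure) : Prop :=
  ⇑(Fe g) =ᵐ[volume] fun ξ : ℝ => m (ξ + Complex.I / 2) * (Fe f) ξ

section LpLimits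

variable {α E : Type*} [MeasurableSpace α] {μ : Measure α} {p : ℝ≥0∞}

theorem tendsto_eLpNorm_indicator_compl [NormedAddCommGroup E] {w : α → E} (hw : MemLp w p μ)
    (hp : p ≠ ∞) {S : ℕ → Set α} (hS : ∀ n, MeasurableSet (S n))
    (hcover : ∀ x, ∀ᶠ n in atTop, x ∈ S n) :
    Tendsto (fun n => eLpNorm ((S n)ᶜ.indicator w) p μ) atTop (𝓝 0) := by
  obtain rfl | hp0 := eq_or_ne p 0
  · simp
  have hpos : 0 < p.toReal := ENNReal.toReal_pos hp0 hp
  have hlintegral : Tendsto (fun n => ∫⁻ x, ‖(S n)ᶜ.indicator w x‖ₑ ^ p.toReal ∂μ) atTop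
      (𝓝 (∫⁻ _, 0 ∂μ)) :=
    tendsto_lintegral_of_dominated_convergence' (fun x => ‖w x‖ₑ ^ p.toReal)
      (fun n => (hw.aestronglyMeasurable.indicator (hS n).compl).enorm.pow_const _)
      (fun n => .of_forall fun x =>
        ENNReal.rpow_le_rpow (enorm_indicator_le_enorm_self _ _) hpos.le)
      (lintegral_rpow_enorm_lt_top_of_eLpNorm_lt_top hp0 hp hw.eLpNorm_lt_top).ne
      (.of_forall fun x => tendsto_const_nhds.congr' <| (hcover x).mono fun n hn => by
        dsimp only
        rw [indicator_of_notMem (notMem_compl_iff.2 hn), enorm_zero,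
          ENNReal.zero_rpow_of_pos hpos])
  have hroot : Tendsto (fun t : ℝ≥0∞ => t ^ (1 / p.toReal)) (𝓝 0) (𝓝 0) := by
    have := (ENNReal.continuous_rpow_const (y := 1 / p.toReal)).tendsto 0
    rwa [ENNReal.zero_rpow_of_pos (one_div_pos.2 hpos)] at this
  rw [lintegral_zero] at hlintegral
  simp only [eLpNorm_eq_lintegral_rpow_enorm_toReal hp0 hp]
  exact hroot.comp hlintegral

theorem tendsto_toLp_indicator [NormedAddCommGroup E] [Fact (1 ≤ p)] {w : α → E}
    (hw : MemLp w p μ) (hp : p ≠ ∞) {S : ℕ → Set α} (hS : ∀ n, MeasurableSet (S n))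
    (hcover : ∀ x, ∀ᶠ n in atTop, x ∈ S n) :
    Tendsto (fun n => (hw.indicator (hS n)).toLp ((S n).indicator w)) atTop (𝓝 (hw.toLp w)) := by
  rw [Lp.tendsto_Lp_iff_tendsto_eLpNorm'']
  refine (tendsto_eLpNorm_indicator_compl hw hp hS hcover).congr fun n => ?_
  rw [← eLpNorm_neg, indicator_compl, neg_sub]

theorem ae_eq_mul_of_tendsto [NormedRing E] [Fact (1 ≤ p)] {φ : α → E} {u v : ℕ → Lp E p μ}
    {u₀ v₀ : Lp E p μ} (hu : Tendsto u atTop (𝓝 u₀)) (hv : Tendsto v atTop (𝓝 v₀))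
    (huv : ∀ n, v n =ᵐ[μ] fun x => φ x * u n x) : v₀ =ᵐ[μ] fun x => φ x * u₀ x := by
  obtain ⟨ns, hns, hu_ae⟩ := (tendstoInMeasure_of_tendsto_Lp hu).exists_seq_tendsto_ae
  obtain ⟨ms, hms, hv_ae⟩ :=
    (tendstoInMeasure_of_tendsto_Lp (hv.comp hns.tendsto_atTop)).exists_seq_tendsto_ae
  filter_upwards [ae_all_iff.2 huv, hu_ae, hv_ae] with x hx hux hvx
  refine tendsto_nhds_unique hvx ?_
  simp only [Function.comp_apply, hx]
  exact (hux.comp hms.tendsto_atTop).const_mul (φ x)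

end LpLimits

section Multiplier

variable {Fe : Lp ℂ 2 expMeasure ≃ₗᵢ[ℂ] Lp ℂ 2 (volume : Measure ℝ)} {m m₁ m₂ : ℂ → ℂ}
  {f g h : Lp ℂ 2 expMeasure}

theorem add_I_div_two_mem_strip (ξ : ℝ) :
    (ξ : ℂ) + Complex.I / 2 ∈ {z : ℂ | 0 < z.im ∧ z.im < 1} := by
  norm_num

theorem continuous_comp_add_I_div_two (hm : ContinuousOn m {z : ℂ | 0 < z.im ∧ z.im < 1}) :
    Continuous fun ξ : ℝ => m (ξ + Complex.I / 2) :=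
  hm.comp_continuous (by fun_prop) add_I_div_two_mem_strip

theorem IsMult.left_unique (hm : ∀ ξ : ℝ, m (ξ + Complex.I / 2) ≠ 0) {f₁ f₂ : Lp ℂ 2 expMeasure}
    (h₁ : IsMult Fe m f₁ g) (h₂ : IsMult Fe m f₂ g) : f₁ = f₂ := by
  refine Fe.injective (Lp.ext ?_)
  filter_upwards [h₁, h₂] with ξ e₁ e₂
  exact mul_left_cancel₀ (hm ξ) (e₁.symm.trans e₂)

theorem IsMult.of_tendsto {f g : ℕ → Lp ℂ 2 expMeasure} {f₀ g₀ : Lp ℂ 2 expMeasure}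
    (hf : Tendsto f atTop (𝓝 f₀)) (hg : Tendsto g atTop (𝓝 g₀))
    (h : ∀ n, IsMult Fe m (f n) (g n)) : IsMult Fe m f₀ g₀ :=
  ae_eq_mul_of_tendsto ((Fe.continuous.tendsto f₀).comp hf) ((Fe.continuous.tendsto g₀).comp hg) h

variable (Fe) in
noncomputable def frequencyCutoff (S : Set ℝ) (hS : MeasurableSet S) (f : Lp ℂ 2 expMeasure) :
    Lp ℂ 2 expMeasure :=
  Fe.symm (((Lp.memLp (Fe f)).indicator hS).toLp (S.indicator (Fe f)))

theorem coeFn_frequencyCutoff {S : Set ℝ} (hS : MeasurableSet S) (f : Lp ℂ 2 expMeasure) :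
    ⇑(Fe (frequencyCutoff Fe S hS f)) =ᵐ[volume] S.indicator (Fe f) := by
  rw [frequencyCutoff, LinearIsometryEquiv.apply_symm_apply]
  exact MemLp.coeFn_toLp _

variable (Fe) in
theorem tendsto_frequencyCutoff {S : ℕ → Set ℝ} (hS : ∀ n, MeasurableSet (S n))
    (hcover : ∀ ξ, ∀ᶠ n in atTop, ξ ∈ S n) (f : Lp ℂ 2 expMeasure) :
    Tendsto (fun n => frequencyCutoff Fe (S n) (hS n) f) atTop (𝓝 f) := by
  have := (Fe.symm.continuous.tendsto _).comp
    (tendsto_toLp_indicator (Lp.memLp (Fe f)) ENNReal.ofNat_ne_top hS hcover)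
  rwa [Lp.toLp_coeFn, LinearIsometryEquiv.symm_apply_apply] at this

theorem IsMult.frequencyCutoff (hfg : IsMult Fe m f g) {S : Set ℝ} (hS : MeasurableSet S) :
    IsMult Fe m (frequencyCutoff Fe S hS f) (frequencyCutoff Fe S hS g) := by
  filter_upwards [coeFn_frequencyCutoff hS g, coeFn_frequencyCutoff hS f, hfg] with ξ hg hf hξ
  rw [hg, hf]
  by_cases hξS : ξ ∈ S <;> simp [hξS, hξ]

theorem exists_isMult_frequencyCutoff (hm : Measurable fun ξ : ℝ => m (ξ + Complex.I / 2))
    {S : Set ℝ} (hS : MeasurableSet S) {K : ℝ≥0} (hmS : ∀ ξ ∈ S, ‖m (ξ + Complex.I / 2)‖ ≤ K)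
    (f : Lp ℂ 2 expMeasure) : ∃ h, IsMult Fe m (frequencyCutoff Fe S hS f) h := by
  have hmem : MemLp (fun ξ : ℝ => m (ξ + Complex.I / 2) * S.indicator (Fe f) ξ) 2 volume := by
    refine (Lp.memLp (Fe f)).of_le_mul (c := K)
      (hm.aestronglyMeasurable.mul ((Lp.aestronglyMeasurable _).indicator hS)) (.of_forall ?_)
    intro ξ
    by_cases hξS : ξ ∈ S
    · simpa [hξS] using mul_le_mul_of_nonneg_right (hmS ξ hξS) (norm_nonneg (Fe f ξ))
    · simp only [hξS, not_false_eq_true, indicator_of_notMem, mul_zero, norm_zero]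
      positivity
  refine ⟨Fe.symm (hmem.toLp _), ?_⟩
  rw [IsMult, Fe.apply_symm_apply]
  filter_upwards [hmem.coeFn_toLp, coeFn_frequencyCutoff hS f] with ξ h₁ h₂
  rw [h₁, h₂]

theorem IsMult.intertwining_mul {A B C : Lp ℂ 2 expMeasure → Lp ℂ 2 expMeasure}
    (hAB : ∀ f g, IsMult Fe m₁ f g → IsMult Fe m₁ (B f) (A g))
    (hBC : ∀ f g, IsMult Fe m₂ f g → IsMult Fe m₂ (C f) (B g))
    (hfh : IsMult Fe m₂ f h) (hfg : IsMult Fe (fun z => m₁ z * m₂ z) f g) :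
    IsMult Fe (fun z => m₁ z * m₂ z) (C f) (A g) := by
  have hhg : IsMult Fe m₁ h g := by
    filter_upwards [hfg, hfh] with ξ e₁ e₂
    rw [e₁, e₂, mul_assoc]
  filter_upwards [hAB h g hhg, hBC f h hfh] with ξ e₁ e₂
  rw [e₁, e₂, mul_assoc]

theorem IsMult.intertwining_mul_of_measurable {A B C : Lp ℂ 2 expMeasure → Lp ℂ 2 expMeasure}
    (hm₂ : Measurable fun ξ : ℝ => m₂ (ξ + Complex.I / 2)) (hA : Continuous A)
    (hC : Continuous C) (hAB : ∀ f g, IsMult Fe m₁ f g → IsMult Fe m₁ (B f) (A g))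
    (hBC : ∀ f g, IsMult Fe m₂ f g → IsMult Fe m₂ (C f) (B g))
    (hfg : IsMult Fe (fun z => m₁ z * m₂ z) f g) :
    IsMult Fe (fun z => m₁ z * m₂ z) (C f) (A g) := by
  set S : ℕ → Set ℝ := fun n => {ξ | ‖m₂ (ξ + Complex.I / 2)‖ ≤ n}
  have hS : ∀ n, MeasurableSet (S n) := fun n => measurableSet_le hm₂.norm measurable_const
  have hcover : ∀ ξ, ∀ᶠ n in atTop, ξ ∈ S n := fun ξ =>
    (eventually_ge_atTop ⌈‖m₂ (ξ + Complex.I / 2)‖⌉₊).mono fun n hn => Nat.ceil_le.1 hn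
  refine IsMult.of_tendsto ((hC.tendsto f).comp (tendsto_frequencyCutoff Fe hS hcover f))
    ((hA.tendsto g).comp (tendsto_frequencyCutoff Fe hS hcover g)) fun n => ?_
  obtain ⟨h, hfh⟩ := exists_isMult_frequencyCutoff (Fe := Fe) hm₂ (hS n) (K := n)
    (fun ξ hξ => by simpa [S] using hξ) f
  exact hfh.intertwining_mul hAB hBC (hfg.frequencyCutoff (hS n))

end Multiplier

theorem multiplier_intertwining_transitivity_general
    (Fe : Lp ℂ 2 expMeasure ≃ₗᵢ[ℂ] Lp ℂ 2 (volume : Measure ℝ)) :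
    (∀ (A B : Lp ℂ 2 expMeasure →L[ℂ] Lp ℂ 2 expMeasure) (m : ℂ → ℂ),
      DifferentiableOn ℂ m {z : ℂ | 0 < z.im ∧ z.im < 1} →
      (∀ z ∈ {z : ℂ | 0 < z.im ∧ z.im < 1}, m z ≠ 0) →
      (∀ f g : Lp ℂ 2 expMeasure, IsMult Fe m f g → IsMult Fe m (B f) (A g)) →
        -- Λ is injective
        (∀ f₁ f₂ g : Lp ℂ 2 expMeasure,
          IsMult Fe m f₁ g → IsMult Fe m f₂ g → f₁ = f₂) ∧
        -- A maps the range of Λ into itself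
        (∀ f g : Lp ℂ 2 expMeasure, IsMult Fe m f g →
          ∃ f' : Lp ℂ 2 expMeasure, IsMult Fe m f' (A g)) ∧
        -- B f = Λ⁻¹ A Λ f for f ∈ D(Λ)
        (∀ f g : Lp ℂ 2 expMeasure, IsMult Fe m f g → IsMult Fe m (B f) (A g)) ∧
        -- equivalently B Λ⁻¹ g = Λ⁻¹ A g for g in the range of Λ
        (∀ f g f' : Lp ℂ 2 expMeasure,
          IsMult Fe m f g → IsMult Fe m f' (A g) → f' = B f)) ∧
    (∀ (A B C : Lp ℂ 2 expMeasure →L[ℂ] Lp ℂ 2 expMeasure) (m₁ m₂ : ℂ → ℂ),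
      DifferentiableOn ℂ m₁ {z : ℂ | 0 < z.im ∧ z.im < 1} →
      (∀ z ∈ {z : ℂ | 0 < z.im ∧ z.im < 1}, m₁ z ≠ 0) →
      DifferentiableOn ℂ m₂ {z : ℂ | 0 < z.im ∧ z.im < 1} →
      (∀ z ∈ {z : ℂ | 0 < z.im ∧ z.im < 1}, m₂ z ≠ 0) →
      (∃ C₁ k₁ : ℝ, 0 < C₁ ∧ 0 < k₁ ∧ ∀ ξ : ℝ,
        ‖m₁ (ξ + Complex.I / 2)‖ ≤ C₁ * Real.exp (k₁ * |ξ|)) →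
      (∃ C₂ k₂ : ℝ, 0 < C₂ ∧ 0 < k₂ ∧ ∀ ξ : ℝ,
        ‖m₂ (ξ + Complex.I / 2)‖ ≤ C₂ * Real.exp (k₂ * |ξ|)) →
      (∀ f g : Lp ℂ 2 expMeasure, IsMult Fe m₁ f g → IsMult Fe m₁ (B f) (A g)) →
      (∀ f g : Lp ℂ 2 expMeasure, IsMult Fe m₂ f g → IsMult Fe m₂ (C f) (B g)) →
      ∀ f g : Lp ℂ 2 expMeasure,
        IsMult Fe (fun z => m₁ z * m₂ z) f g →
        IsMult Fe (fun z => m₁ z * m₂ z) (C f) (A g)) := by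
  refine ⟨fun A B m _ hm hAB => ?_, fun A B C m₁ m₂ _ _ hm₂ _ _ _ hAB hBC f g hfg => ?_⟩
  · have hm' : ∀ ξ : ℝ, m (ξ + Complex.I / 2) ≠ 0 := fun ξ => hm _ (add_I_div_two_mem_strip ξ)
    exact ⟨fun f₁ f₂ g h₁ h₂ => h₁.left_unique hm' h₂, fun f g h => ⟨B f, hAB f g h⟩, hAB,
      fun f g f' h h' => h'.left_unique hm' (hAB f g h)⟩
  · exact hfg.intertwining_mul_of_measurable
      (continuous_comp_add_I_div_two hm₂.continuousOn).measurable A.continuous C.continuous hAB hBC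

/-- (1) If `A, B` are bounded on `L²(ℝ,e)`, `Λ` is a shifted Fourier
multiplier operator with analytic zero-free multiplier `m` on `S_(0,1)`, and `AΛ = ΛB` on
`D(Λ)`, then `Λ` is injective, `A` maps the range of `Λ` into itself, `B f = Λ⁻¹ A Λ f`
on `D(Λ)` and `B Λ⁻¹ g = Λ⁻¹ A g` on the range of `Λ`.
(2) If moreover `Λ₁, Λ₂` have analytic zero-free multipliers `m₁, m₂` on `S_(0,1)` with an
exponential growth bound on the critical line, `AΛ₁ = Λ₁B` on `D(Λ₁)` and `BΛ₂ = Λ₂C` on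
`D(Λ₂)`, then `AΛ₁₂ = Λ₁₂C` on `D(Λ₁₂)`, where `Λ₁₂` has multiplier `m₁ ⬝ m₂`. -/
theorem multiplier_intertwining_transitivity
    (Fe : Lp ℂ 2 expMeasure ≃ₗᵢ[ℂ] Lp ℂ 2 (volume : Measure ℝ))
    (hFe : ∀ (f : ℝ → ℂ) (hf : MemLp f 2 expMeasure),
      Integrable (fun x => (Real.exp (x / 2) : ℂ) * f x) →
      ⇑(Fe (hf.toLp f)) =ᵐ[volume] fourierInt (fun x => (Real.exp (x / 2) : ℂ) * f x)) :
    (∀ (A B : Lp ℂ 2 expMeasure →L[ℂ] Lp ℂ 2 expMeasure) (m : ℂ → ℂ),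
      DifferentiableOn ℂ m {z : ℂ | 0 < z.im ∧ z.im < 1} →
      (∀ z ∈ {z : ℂ | 0 < z.im ∧ z.im < 1}, m z ≠ 0) →
      (∀ f g : Lp ℂ 2 expMeasure, IsMult Fe m f g → IsMult Fe m (B f) (A g)) →
        -- Λ is injective
        (∀ f₁ f₂ g : Lp ℂ 2 expMeasure,
          IsMult Fe m f₁ g → IsMult Fe m f₂ g → f₁ = f₂) ∧
        -- A maps the range of Λ into itself
        (∀ f g : Lp ℂ 2 expMeasure, IsMult Fe m f g →
          ∃ f' : Lp ℂ 2 expMeasure, IsMult Fe m f' (A g)) ∧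
        -- B f = Λ⁻¹ A Λ f for f ∈ D(Λ)
        (∀ f g : Lp ℂ 2 expMeasure, IsMult Fe m f g → IsMult Fe m (B f) (A g)) ∧
        -- equivalently B Λ⁻¹ g = Λ⁻¹ A g for g in the range of Λ
        (∀ f g f' : Lp ℂ 2 expMeasure,
          IsMult Fe m f g → IsMult Fe m f' (A g) → f' = B f)) ∧
    (∀ (A B C : Lp ℂ 2 expMeasure →L[ℂ] Lp ℂ 2 expMeasure) (m₁ m₂ : ℂ → ℂ),
      DifferentiableOn ℂ m₁ {z : ℂ | 0 < z.im ∧ z.im < 1} →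
      (∀ z ∈ {z : ℂ | 0 < z.im ∧ z.im < 1}, m₁ z ≠ 0) →
      DifferentiableOn ℂ m₂ {z : ℂ | 0 < z.im ∧ z.im < 1} →
      (∀ z ∈ {z : ℂ | 0 < z.im ∧ z.im < 1}, m₂ z ≠ 0) →
      (∃ C₁ k₁ : ℝ, 0 < C₁ ∧ 0 < k₁ ∧ ∀ ξ : ℝ,
        ‖m₁ (ξ + Complex.I / 2)‖ ≤ C₁ * Real.exp (k₁ * |ξ|)) →
      (∃ C₂ k₂ : ℝ, 0 < C₂ ∧ 0 < k₂ ∧ ∀ ξ : ℝ,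
        ‖m₂ (ξ + Complex.I / 2)‖ ≤ C₂ * Real.exp (k₂ * |ξ|)) →
      (∀ f g : Lp ℂ 2 expMeasure, IsMult Fe m₁ f g → IsMult Fe m₁ (B f) (A g)) →
      (∀ f g : Lp ℂ 2 expMeasure, IsMult Fe m₂ f g → IsMult Fe m₂ (C f) (B g)) →
      ∀ f g : Lp ℂ 2 expMeasure,
        IsMult Fe (fun z => m₁ z * m₂ z) f g →
        IsMult Fe (fun z => m₁ z * m₂ z) (C f) (A g)) :=
  multiplier_intertwining_transitivity_general Fe
end

section
/- Let φ be a Bernstein function, φ(z) = c + d·z + ∫_(0,∞) (1 − e^{-zy}) ν(dy). Then for all a, b ≥ 0 and all ξ ∈ ℝ: |φ(a+iξ) − φ(b+iξ)| ≤ φ(|a−b|) − φ(0). Consequently, for all a ≥ 0, b > 0 with φ(b) > 0 and all ξ ∈ ℝ: |φ(a+iξ)/φ(b+iξ) − 1| ≤ (φ(|a−b|) − φ(0))/φ(b). -/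
open MeasureTheory Set
open scoped ENNReal

/-!
The drift and the constant are harmless, so everything reduces to a pointwise bound on the Lévy
integrand. For `a ≥ b ≥ 0` and `y > 0`,
`e^{-(b+iξ)y} - e^{-(a+iξ)y} = e^{-iξy} e^{-by} (1 - e^{-(a-b)y})`, whose modulus is at most
`1 - e^{-(a-b)y}`; integrating against `ν` gives `φ(a-b) - φ(0)`. For the quotient, pointwise
`Re (1 - e^{-(b+iξ)y}) ≥ 1 - e^{-by}`, so `|φ(b+iξ)| ≥ Re φ(b+iξ) ≥ φ(b)`.
-/

theorem Complex.norm_one_sub_exp_le_two_mul_min {w : ℂ} (hw : w.re ≤ 0) :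
    ‖1 - exp w‖ ≤ 2 * min ‖w‖ 1 := by
  rcases le_total ‖w‖ 1 with h | h
  · rw [min_eq_left h, norm_sub_rev]
    exact norm_exp_sub_one_le h
  · have hexp : ‖exp w‖ ≤ 1 := by
      rw [norm_exp, Real.exp_le_one_iff]
      exact hw
    calc ‖1 - exp w‖ ≤ ‖(1 : ℂ)‖ + ‖exp w‖ := norm_sub_le _ _
      _ ≤ 2 * min ‖w‖ 1 := by rw [min_eq_right h, norm_one]; linarith

theorem min_mul_one_le_max_mul_min_one {k y : ℝ} (hy : 0 ≤ y) :
    min (k * y) 1 ≤ max k 1 * min y 1 := by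
  rcases le_total y 1 with h | h
  · rw [min_eq_left h]
    exact (min_le_left _ _).trans (mul_le_mul_of_nonneg_right (le_max_left _ _) hy)
  · rw [min_eq_right h, mul_one]
    exact (min_le_right _ _).trans (le_max_right _ _)

theorem abs_exp_neg_mul_sub_exp_neg_mul_le {a b y : ℝ} (ha : 0 ≤ a) (hb : 0 ≤ b) (hy : 0 ≤ y) :
    |Real.exp (-(a * y)) - Real.exp (-(b * y))| ≤ 1 - Real.exp (-(|a - b| * y)) := by
  wlog hab : a ≤ b generalizing a b
  · rw [abs_sub_comm, abs_sub_comm a]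
    exact this hb ha (le_of_not_ge hab)
  have hsplit : Real.exp (-(b * y)) = Real.exp (-(a * y)) * Real.exp (-(|a - b| * y)) := by
    rw [← Real.exp_add, abs_of_nonpos (sub_nonpos.2 hab)]
    ring_nf
  have hexp_le_one : Real.exp (-(a * y)) ≤ 1 := Real.exp_le_one_iff.2 (by nlinarith)
  have hgap : 0 ≤ 1 - Real.exp (-(|a - b| * y)) :=
    sub_nonneg.2 (Real.exp_le_one_iff.2 (by nlinarith [abs_nonneg (a - b)]))
  rw [hsplit, ← mul_one_sub, abs_of_nonneg (mul_nonneg (Real.exp_pos _).le hgap)]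
  exact mul_le_of_le_one_left hgap hexp_le_one

theorem norm_cexp_neg_mul_sub_cexp_neg_mul_le {a b y : ℝ} (ha : 0 ≤ a) (hb : 0 ≤ b)
    (hy : 0 ≤ y) (ξ : ℝ) :
    ‖Complex.exp (-(a + ξ * Complex.I) * y) - Complex.exp (-(b + ξ * Complex.I) * y)‖ ≤
      1 - Real.exp (-(|a - b| * y)) := by
  have hfactor : ∀ t : ℝ, Complex.exp (-(t + ξ * Complex.I) * y) =
      Complex.exp ((-(ξ * y) : ℝ) * Complex.I) * (Real.exp (-(t * y)) : ℂ) := by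
    intro t
    rw [Complex.ofReal_exp, ← Complex.exp_add]
    push_cast
    ring_nf
  rw [hfactor, hfactor, ← mul_sub, norm_mul, Complex.norm_exp_ofReal_mul_I, one_mul,
    ← Complex.ofReal_sub, Complex.norm_real, Real.norm_eq_abs]
  exact abs_exp_neg_mul_sub_exp_neg_mul_le ha hb hy

theorem integrable_min_one_of_lintegral_ne_top {ν : Measure ℝ}
    (hν : ∫⁻ y in Ioi (0 : ℝ), ENNReal.ofReal (min y 1) ∂ν ≠ ⊤) :
    Integrable (fun y : ℝ => min y 1) (ν.restrict (Ioi 0)) := by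
  refine ⟨(continuous_id.min continuous_const).aestronglyMeasurable, ?_⟩
  rw [hasFiniteIntegral_iff_ofReal]
  · exact hν.lt_top
  · filter_upwards [ae_restrict_mem measurableSet_Ioi] with y (hy : 0 < y)
    exact le_min hy.le zero_le_one

section LevyIntegrand

variable {ν : Measure ℝ}

theorem integrable_one_sub_cexp_neg_mul
    (hν : Integrable (fun y : ℝ => min y 1) (ν.restrict (Ioi 0)))
    {z : ℂ} (hz : 0 ≤ z.re) :
    Integrable (fun y : ℝ => 1 - Complex.exp (-z * y)) (ν.restrict (Ioi 0)) := by
  refine (hν.const_mul (2 * max ‖z‖ 1)).mono' (by fun_prop) ?_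
  filter_upwards [ae_restrict_mem measurableSet_Ioi] with y (hy : 0 < y)
  have hre : (-z * y).re ≤ 0 := by
    simpa [Complex.mul_re] using mul_nonneg hz hy.le
  have hnorm : ‖-z * y‖ = ‖z‖ * y := by
    rw [norm_mul, norm_neg, Complex.norm_real, Real.norm_of_nonneg hy.le]
  calc ‖1 - Complex.exp (-z * y)‖ ≤ 2 * min (‖z‖ * y) 1 :=
        hnorm ▸ Complex.norm_one_sub_exp_le_two_mul_min hre
    _ ≤ 2 * (max ‖z‖ 1 * min y 1) := by gcongr; exact min_mul_one_le_max_mul_min_one hy.le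
    _ = 2 * max ‖z‖ 1 * min y 1 := by ring

theorem re_one_sub_cexp_neg_ofReal_mul (r y : ℝ) :
    (1 - Complex.exp (-r * y)).re = 1 - Real.exp (-(r * y)) := by
  rw [← Complex.ofReal_neg, ← Complex.ofReal_mul, ← Complex.ofReal_exp, ← Complex.ofReal_one,
    ← Complex.ofReal_sub, Complex.ofReal_re, neg_mul]

theorem integrable_one_sub_exp_neg_mul
    (hν : Integrable (fun y : ℝ => min y 1) (ν.restrict (Ioi 0)))
    {r : ℝ} (hr : 0 ≤ r) :
    Integrable (fun y : ℝ => 1 - Real.exp (-(r * y))) (ν.restrict (Ioi 0)) :=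
  (integrable_one_sub_cexp_neg_mul hν (z := r) (by simpa using hr)).re.congr
    (.of_forall (re_one_sub_cexp_neg_ofReal_mul r))

end LevyIntegrand

noncomputable def bernsteinFunction (c d : ℝ) (ν : Measure ℝ) (z : ℂ) : ℂ :=
  c + d * z + ∫ y in Ioi (0 : ℝ), (1 - Complex.exp (-z * y)) ∂ν

section BernsteinFunction

variable {c d : ℝ} {ν : Measure ℝ}

theorem bernsteinFunction_zero : bernsteinFunction c d ν 0 = c := by
  simp [bernsteinFunction]

theorem re_bernsteinFunction_ofReal (r : ℝ) :
    (bernsteinFunction c d ν r).re =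
      c + d * r + ∫ y in Ioi (0 : ℝ), (1 - Real.exp (-(r * y))) ∂ν := by
  have hint : ∫ y in Ioi (0 : ℝ), (1 - Complex.exp (-r * y)) ∂ν =
      ((∫ y in Ioi (0 : ℝ), (1 - Real.exp (-(r * y))) ∂ν : ℝ) : ℂ) := by
    rw [← integral_complex_ofReal]
    push_cast
    simp_rw [neg_mul]
  rw [bernsteinFunction, hint]
  simp

theorem re_bernsteinFunction_re_le (hν : Integrable (fun y : ℝ => min y 1) (ν.restrict (Ioi 0)))
    {z : ℂ} (hz : 0 ≤ z.re) :
    (bernsteinFunction c d ν z.re).re ≤ (bernsteinFunction c d ν z).re := by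
  have hlevy : ∫ y in Ioi (0 : ℝ), (1 - Real.exp (-(z.re * y))) ∂ν ≤
      (∫ y in Ioi (0 : ℝ), (1 - Complex.exp (-z * y)) ∂ν).re := by
    refine (integral_mono (integrable_one_sub_exp_neg_mul hν hz)
      (integrable_one_sub_cexp_neg_mul hν hz).re fun y => ?_).trans_eq
      (integral_re (integrable_one_sub_cexp_neg_mul hν hz))
    have hexp : (Complex.exp (-z * y)).re ≤ Real.exp (-(z.re * y)) :=
      (Complex.re_le_norm _).trans_eq (by simp [Complex.norm_exp])
    rw [RCLike.re_to_complex, Complex.sub_re, Complex.one_re]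
    exact sub_le_sub_left hexp 1
  rw [re_bernsteinFunction_ofReal, bernsteinFunction, Complex.add_re, Complex.add_re,
    Complex.ofReal_re, Complex.re_ofReal_mul]
  linarith

theorem norm_bernsteinFunction_sub_le (hd : 0 ≤ d)
    (hν : Integrable (fun y : ℝ => min y 1) (ν.restrict (Ioi 0)))
    {a b : ℝ} (ha : 0 ≤ a) (hb : 0 ≤ b) (ξ : ℝ) :
    ‖bernsteinFunction c d ν (a + ξ * Complex.I) - bernsteinFunction c d ν (b + ξ * Complex.I)‖ ≤
      (bernsteinFunction c d ν (|a - b| : ℝ)).re - (bernsteinFunction c d ν 0).re := by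
  have hdrift : ‖(d : ℂ) * (a + ξ * Complex.I) - d * (b + ξ * Complex.I)‖ = d * |a - b| := by
    rw [← mul_sub, add_sub_add_right_eq_sub, ← Complex.ofReal_sub, norm_mul, Complex.norm_real,
      Complex.norm_real, Real.norm_of_nonneg hd, Real.norm_eq_abs]
  have hlevy : ‖(∫ y in Ioi (0 : ℝ), (1 - Complex.exp (-(a + ξ * Complex.I) * y)) ∂ν) -
      ∫ y in Ioi (0 : ℝ), (1 - Complex.exp (-(b + ξ * Complex.I) * y)) ∂ν‖ ≤
      ∫ y in Ioi (0 : ℝ), (1 - Real.exp (-(|a - b| * y))) ∂ν := by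
    rw [← integral_sub (integrable_one_sub_cexp_neg_mul hν (by simpa using ha))
      (integrable_one_sub_cexp_neg_mul hν (by simpa using hb))]
    refine norm_integral_le_of_norm_le (integrable_one_sub_exp_neg_mul hν (abs_nonneg _)) ?_
    filter_upwards [ae_restrict_mem measurableSet_Ioi] with y (hy : 0 < y)
    rw [sub_sub_sub_cancel_left, abs_sub_comm]
    exact norm_cexp_neg_mul_sub_cexp_neg_mul_le hb ha hy.le ξ
  calc _ = ‖((d : ℂ) * (a + ξ * Complex.I) - d * (b + ξ * Complex.I)) +
        ((∫ y in Ioi (0 : ℝ), (1 - Complex.exp (-(a + ξ * Complex.I) * y)) ∂ν) -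
          ∫ y in Ioi (0 : ℝ), (1 - Complex.exp (-(b + ξ * Complex.I) * y)) ∂ν)‖ := by
        simp only [bernsteinFunction]; ring_nf
    _ ≤ d * |a - b| + ∫ y in Ioi (0 : ℝ), (1 - Real.exp (-(|a - b| * y))) ∂ν :=
        (norm_add_le _ _).trans (hdrift ▸ by gcongr)
    _ = _ := by
        rw [re_bernsteinFunction_ofReal, bernsteinFunction_zero, Complex.ofReal_re]
        ring

end BernsteinFunction

theorem bernstein_diff_bound_general
    (c d : ℝ) (hd : 0 ≤ d)
    (ν : Measure ℝ)
    (hν : ∫⁻ y in Set.Ioi (0:ℝ), ENNReal.ofReal (min y 1) ∂ν ≠ ⊤)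
    (φ : ℂ → ℂ)
    (hφ : ∀ z : ℂ, 0 ≤ z.re →
      φ z = (c : ℂ) + (d : ℂ) * z +
        ∫ y in Set.Ioi (0:ℝ), (1 - Complex.exp (-z * (y : ℂ))) ∂ν) :
    (∀ a b : ℝ, 0 ≤ a → 0 ≤ b → ∀ ξ : ℝ,
      ‖φ ((a : ℂ) + (ξ : ℂ) * Complex.I) - φ ((b : ℂ) + (ξ : ℂ) * Complex.I)‖ ≤
        (φ ((|a - b| : ℝ) : ℂ)).re - (φ 0).re) ∧
    (∀ a b : ℝ, 0 ≤ a → 0 < b → 0 < (φ ((b : ℝ) : ℂ)).re → ∀ ξ : ℝ,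
      ‖φ ((a : ℂ) + (ξ : ℂ) * Complex.I) / φ ((b : ℂ) + (ξ : ℂ) * Complex.I) - 1‖ ≤
        ((φ ((|a - b| : ℝ) : ℂ)).re - (φ 0).re) / (φ ((b : ℝ) : ℂ)).re) := by
  have hν' := integrable_min_one_of_lintegral_ne_top hν
  have hφ_eq : ∀ z : ℂ, 0 ≤ z.re → φ z = bernsteinFunction c d ν z := hφ
  have hdiff : ∀ a b : ℝ, 0 ≤ a → 0 ≤ b → ∀ ξ : ℝ,
      ‖φ (a + ξ * Complex.I) - φ (b + ξ * Complex.I)‖ ≤ (φ (|a - b| : ℝ)).re - (φ 0).re := by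
    intro a b ha hb ξ
    rw [hφ_eq _ (by simpa using ha), hφ_eq _ (by simpa using hb), hφ_eq _ (by simp), hφ_eq 0 le_rfl]
    exact norm_bernsteinFunction_sub_le hd hν' ha hb ξ
  refine ⟨hdiff, fun a b ha hb hφb ξ => ?_⟩
  have hlow : (φ b).re ≤ ‖φ (b + ξ * Complex.I)‖ := by
    have hre : 0 ≤ ((b : ℂ) + ξ * Complex.I).re := by simpa using hb.le
    rw [hφ_eq _ hre, hφ_eq _ (by simpa using hb.le)]
    simpa using (re_bernsteinFunction_re_le hν' hre).trans (Complex.re_le_norm _)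
  have hne : φ (b + ξ * Complex.I) ≠ 0 := norm_pos_iff.mp (hφb.trans_le hlow)
  rw [div_sub_one hne, norm_div]
  exact div_le_div₀ ((norm_nonneg _).trans (hdiff a b ha hb.le ξ)) (hdiff a b ha hb.le ξ) hφb hlow

/-- Let `φ` be a Bernstein function,
`φ z = c + d z + ∫_(0,∞) (1 − e^{-z y}) ν(dy)` (for `Re z ≥ 0`).  Then for all
`a, b ≥ 0` and `ξ ∈ ℝ`, `|φ(a+iξ) − φ(b+iξ)| ≤ φ(|a−b|) − φ(0)`; consequently, for
`a ≥ 0`, `b > 0` with `φ(b) > 0`, `|φ(a+iξ)/φ(b+iξ) − 1| ≤ (φ(|a−b|) − φ(0))/φ(b)`. -/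
theorem bernstein_diff_bound
    (c d : ℝ) (hc : 0 ≤ c) (hd : 0 ≤ d)
    (ν : Measure ℝ)
    (hν : ∫⁻ y in Set.Ioi (0:ℝ), ENNReal.ofReal (min y 1) ∂ν ≠ ⊤)
    (φ : ℂ → ℂ)
    (hφ : ∀ z : ℂ, 0 ≤ z.re →
      φ z = (c : ℂ) + (d : ℂ) * z +
        ∫ y in Set.Ioi (0:ℝ), (1 - Complex.exp (-z * (y : ℂ))) ∂ν) :
    (∀ a b : ℝ, 0 ≤ a → 0 ≤ b → ∀ ξ : ℝ,
      ‖φ ((a : ℂ) + (ξ : ℂ) * Complex.I) - φ ((b : ℂ) + (ξ : ℂ) * Complex.I)‖ ≤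
        (φ ((|a - b| : ℝ) : ℂ)).re - (φ 0).re) ∧
    (∀ a b : ℝ, 0 ≤ a → 0 < b → 0 < (φ ((b : ℝ) : ℂ)).re → ∀ ξ : ℝ,
      ‖φ ((a : ℂ) + (ξ : ℂ) * Complex.I) / φ ((b : ℂ) + (ξ : ℂ) * Complex.I) - 1‖ ≤
        ((φ ((|a - b| : ℝ) : ℂ)).re - (φ 0).re) / (φ ((b : ℝ) : ℂ)).re) :=
  bernstein_diff_bound_general c d hd ν hν φ hφ
end

section
/- Let ψ : ℝ → ℂ be a continuous negative definite function given in Lévy–Khintchine form ψ(ξ) = q − i·b·ξ + σ²ξ² + ∫_ℝ (1 − e^{iξy} + iξy·1_{|y|≤1}) μ(dy), with q ≥ 0, b ∈ ℝ, σ² ≥ 0 and μ a nonnegative Borel measure on ℝ∖{0} with ∫ min(y²,1) μ(dy) < ∞. For a Schwartz function f : ℝ → ℂ define A f(x) = −e^{-x} (2π)^{-1/2} ∫_ℝ e^{iξx} ψ(ξ) 𝓕f(ξ) dξ (the integral converges absolutely since |ψ(ξ)| grows at most quadratically and 𝓕f is Schwartz). Then the function x ↦ A f(x)·conj(f(x))·e^x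 is Lebesgue integrable on ℝ and Re ∫_ℝ A f(x)·conj(f(x))·e^x dx ≤ 0; that is, A is dissipative on the Schwartz functions with respect to the L²(ℝ,e) inner product. -/
/-!
Write `h = ψ · 𝓕f`. The weight `e^x` cancels the factor `e^{-x}` in `A f`, so the pairing is
`-∫ 𝓕⁻¹h · conj f`, and Fubini turns it into `-∫ ψ |𝓕f|²`. In Lévy–Khintchine form
`Re ψ(ξ) = q + σ² ξ² + ∫ (1 - cos ξy) μ(dy) ≥ 0`, which gives the sign. Every integral converges
absolutely because `|ψ(ξ)| ≤ C (1 + ξ²)` (use `|e^{iθ} - 1 - iθ| ≤ 2θ²` with `θ = ξy` for `|y| ≤ 1`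
and `|1 - e^{iθ}| ≤ 2` for `|y| > 1`), while `𝓕f` is a rescaled Schwartz function.
-/

open MeasureTheory Set
open scoped ENNReal

open scoped FourierTransform SchwartzMap ComplexConjugate

lemma integrable_conj {α : Type*} [MeasurableSpace α] {μ : Measure α} {g : α → ℂ}
    (hg : Integrable g μ) : Integrable (fun x => conj (g x)) μ :=
  (LinearIsometryEquiv.integrable_comp_iff Complex.conjLIE).2 hg

lemma re_integral_mul_mul_conj_nonneg {α : Type*} [MeasurableSpace α] {μ : Measure α}
    {ψ F : α → ℂ} (hint : Integrable (fun x => ψ x * F x * conj (F x)) μ)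
    (hψ : ∀ x, 0 ≤ (ψ x).re) :
    0 ≤ (∫ x, ψ x * F x * conj (F x) ∂μ).re := by
  show 0 ≤ RCLike.re (∫ x, ψ x * F x * conj (F x) ∂μ)
  rw [← integral_re hint]
  refine integral_nonneg fun x => ?_
  show 0 ≤ (ψ x * F x * conj (F x)).re
  rw [mul_assoc, Complex.mul_conj, Complex.re_mul_ofReal]
  exact mul_nonneg (hψ x) (Complex.normSq_nonneg _)

lemma norm_exp_I_mul_ofReal_sub_one_sub_le (θ : ℝ) :
    ‖Complex.exp (Complex.I * θ) - 1 - Complex.I * θ‖ ≤ 2 * θ ^ 2 := by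
  have hIθ : ‖Complex.I * θ‖ = |θ| := by simp
  rcases le_or_gt |θ| 1 with hθ | hθ
  · calc _ ≤ ‖Complex.I * θ‖ ^ 2 := Complex.norm_exp_sub_one_sub_id_le (hIθ ▸ hθ)
      _ ≤ 2 * θ ^ 2 := by rw [hIθ, sq_abs]; nlinarith [sq_nonneg θ]
  · calc _ ≤ ‖Complex.exp (Complex.I * θ) - 1‖ + ‖Complex.I * θ‖ := norm_sub_le _ _
      _ ≤ |θ| + |θ| := by
          rw [hIθ, ← Real.norm_eq_abs]; gcongr; exact Real.norm_exp_I_mul_ofReal_sub_one_le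
      _ ≤ 2 * θ ^ 2 := by nlinarith [sq_abs θ]

section LevyKernel

noncomputable def levyKernel (ξ y : ℝ) : ℂ :=
  1 - Complex.exp (Complex.I * ξ * y) +
    Set.indicator {y : ℝ | |y| ≤ 1} (fun y : ℝ => Complex.I * ξ * y) y

lemma norm_levyKernel_le (ξ y : ℝ) : ‖levyKernel ξ y‖ ≤ 2 * (1 + ξ ^ 2) * min (y ^ 2) 1 := by
  by_cases hy : |y| ≤ 1
  · have hy2 : y ^ 2 ≤ 1 := by nlinarith [sq_abs y, abs_nonneg y]
    have hK : levyKernel ξ y =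
        -(Complex.exp (Complex.I * ↑(ξ * y)) - 1 - Complex.I * ↑(ξ * y)) := by
      simp only [levyKernel, indicator_of_mem (show y ∈ {y : ℝ | |y| ≤ 1} from hy)]
      rw [Complex.ofReal_mul, ← mul_assoc]; ring
    rw [hK, norm_neg, min_eq_left hy2]
    calc _ ≤ 2 * (ξ * y) ^ 2 := norm_exp_I_mul_ofReal_sub_one_sub_le _
      _ ≤ _ := by nlinarith [sq_nonneg ξ, sq_nonneg y]
  · have hy2 : 1 ≤ y ^ 2 := by nlinarith [sq_abs y]
    simp only [levyKernel, indicator_of_notMem (show y ∉ {y : ℝ | |y| ≤ 1} from hy), add_zero,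
      min_eq_right hy2]
    calc _ ≤ ‖(1 : ℂ)‖ + ‖Complex.exp (Complex.I * ξ * y)‖ := norm_sub_le _ _
      _ = 2 := by simp [Complex.norm_exp]; norm_num
      _ ≤ _ := by nlinarith [sq_nonneg ξ]

lemma levyKernel_re_nonneg (ξ y : ℝ) : 0 ≤ (levyKernel ξ y).re := by
  have hre : (Complex.exp (Complex.I * ξ * y)).re = Real.cos (ξ * y) := by
    rw [show Complex.I * ξ * y = (ξ * y : ℝ) * Complex.I by push_cast; ring]
    exact Complex.exp_ofReal_mul_I_re _
  have hK : (levyKernel ξ y).re = 1 - Real.cos (ξ * y) := by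
    simp only [levyKernel, indicator_apply]
    split_ifs <;> simp [hre]
  rw [hK]
  linarith [Real.cos_le_one (ξ * y)]

lemma measurable_levyKernel (ξ : ℝ) : Measurable (levyKernel ξ) :=
  Measurable.add (by fun_prop) <|
    (by fun_prop : Measurable fun y : ℝ => Complex.I * ξ * y).indicator
      (measurableSet_le measurable_abs measurable_const)

lemma continuous_levyKernel (y : ℝ) : Continuous fun ξ => levyKernel ξ y := by
  by_cases hy : y ∈ {y : ℝ | |y| ≤ 1}
  · simp only [levyKernel, indicator_of_mem hy]; fun_prop
  · simp only [levyKernel, indicator_of_notMem hy, add_zero]; fun_prop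

variable {μ : Measure ℝ}

lemma integrable_min_sq_one (hμ : ∫⁻ y : ℝ, ENNReal.ofReal (min (y ^ 2) 1) ∂μ ≠ ⊤) :
    Integrable (fun y : ℝ => min (y ^ 2) 1) μ := by
  refine ⟨by fun_prop, ?_⟩
  rw [hasFiniteIntegral_iff_ofReal (ae_of_all _ fun y => by positivity)]
  exact hμ.lt_top

lemma integrable_levyKernel (hμ : Integrable (fun y : ℝ => min (y ^ 2) 1) μ) (ξ : ℝ) :
    Integrable (levyKernel ξ) μ :=
  (hμ.const_mul _).mono' (measurable_levyKernel ξ).aestronglyMeasurable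
    (ae_of_all _ (norm_levyKernel_le ξ))

lemma norm_integral_levyKernel_le (hμ : Integrable (fun y : ℝ => min (y ^ 2) 1) μ) (ξ : ℝ) :
    ‖∫ y, levyKernel ξ y ∂μ‖ ≤ 2 * (1 + ξ ^ 2) * ∫ y, min (y ^ 2) 1 ∂μ := by
  rw [← integral_const_mul]
  exact norm_integral_le_of_norm_le (hμ.const_mul _) (ae_of_all _ (norm_levyKernel_le ξ))

lemma continuous_integral_levyKernel (hμ : Integrable (fun y : ℝ => min (y ^ 2) 1) μ) :
    Continuous fun ξ => ∫ y, levyKernel ξ y ∂μ := by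
  refine continuous_iff_continuousAt.2 fun ξ₀ => continuousAt_of_dominated
    (bound := fun y => 2 * (1 + (|ξ₀| + 1) ^ 2) * min (y ^ 2) 1)
    (.of_forall fun ξ => (measurable_levyKernel ξ).aestronglyMeasurable) ?_
    (hμ.const_mul _) (ae_of_all _ fun y => (continuous_levyKernel y).continuousAt)
  filter_upwards [Metric.ball_mem_nhds ξ₀ one_pos] with ξ hξ
  refine ae_of_all _ fun y => (norm_levyKernel_le ξ y).trans ?_
  have hξ' : |ξ| ≤ |ξ₀| + 1 := by
    have := abs_sub_abs_le_abs_sub ξ ξ₀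
    rw [Metric.mem_ball, Real.dist_eq] at hξ
    linarith
  have : ξ ^ 2 ≤ (|ξ₀| + 1) ^ 2 := by
    rw [← sq_abs ξ]; exact pow_le_pow_left₀ (abs_nonneg ξ) hξ' 2
  gcongr

end LevyKernel

section LevyKhintchineSymbol

noncomputable def levyKhintchineSymbol (q b σsq : ℝ) (μ : Measure ℝ) (ξ : ℝ) : ℂ :=
  (q : ℂ) - Complex.I * b * ξ + σsq * ξ ^ 2 + ∫ y : ℝ, levyKernel ξ y ∂μ

variable (q b σsq : ℝ) {μ : Measure ℝ}

lemma continuous_levyKhintchineSymbol (hμ : Integrable (fun y : ℝ => min (y ^ 2) 1) μ) :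
    Continuous (levyKhintchineSymbol q b σsq μ) :=
  (by fun_prop : Continuous fun ξ : ℝ => (q : ℂ) - Complex.I * b * ξ + σsq * (ξ : ℂ) ^ 2).add
    (continuous_integral_levyKernel hμ)

variable {q σsq} in
lemma re_levyKhintchineSymbol_nonneg (hq : 0 ≤ q) (hσ : 0 ≤ σsq)
    (hμ : Integrable (fun y : ℝ => min (y ^ 2) 1) μ) (ξ : ℝ) :
    0 ≤ (levyKhintchineSymbol q b σsq μ ξ).re := by
  have hint : 0 ≤ (∫ y, levyKernel ξ y ∂μ).re := by
    show 0 ≤ RCLike.re (∫ y, levyKernel ξ y ∂μ)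
    rw [← integral_re (integrable_levyKernel hμ ξ)]
    exact integral_nonneg fun y => levyKernel_re_nonneg ξ y
  have hre : (levyKhintchineSymbol q b σsq μ ξ).re =
      q + σsq * ξ ^ 2 + (∫ y, levyKernel ξ y ∂μ).re := by
    simp [levyKhintchineSymbol, ← Complex.ofReal_pow]
  rw [hre]
  positivity

lemma norm_levyKhintchineSymbol_le (hμ : Integrable (fun y : ℝ => min (y ^ 2) 1) μ) (ξ : ℝ) :
    ‖levyKhintchineSymbol q b σsq μ ξ‖ ≤
      (|q| + |b| + |σsq| + 2 * ∫ y, min (y ^ 2) 1 ∂μ) * (1 + ξ ^ 2) := by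
  have hξ : |ξ| ≤ 1 + ξ ^ 2 := by nlinarith [sq_abs ξ, sq_nonneg (|ξ| - 1)]
  have hq : ‖(q : ℂ)‖ ≤ |q| * (1 + ξ ^ 2) := by
    rw [Complex.norm_real, Real.norm_eq_abs]; nlinarith [abs_nonneg q, sq_nonneg ξ]
  have hb : ‖Complex.I * b * ξ‖ ≤ |b| * (1 + ξ ^ 2) := by
    simp only [norm_mul, Complex.norm_I, Complex.norm_real, Real.norm_eq_abs, one_mul]
    gcongr
  have hσ : ‖(σsq : ℂ) * (ξ : ℂ) ^ 2‖ ≤ |σsq| * (1 + ξ ^ 2) := by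
    simp only [norm_mul, norm_pow, Complex.norm_real, Real.norm_eq_abs, sq_abs]
    gcongr; linarith
  have hK := norm_integral_levyKernel_le hμ ξ
  calc ‖levyKhintchineSymbol q b σsq μ ξ‖
      ≤ ‖(q : ℂ)‖ + ‖Complex.I * b * ξ‖ + ‖(σsq : ℂ) * (ξ : ℂ) ^ 2‖ +
          ‖∫ y, levyKernel ξ y ∂μ‖ :=
        (norm_add_le _ _).trans <| add_le_add_left
          ((norm_add_le _ _).trans (add_le_add_left (norm_sub_le _ _) _)) _
    _ ≤ _ := by linarith

end LevyKhintchineSymbol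

lemma fourierInt_eq_fourier (g : ℝ → ℂ) (ξ : ℝ) :
    fourierInt g ξ = (Real.sqrt (2 * Real.pi) : ℂ)⁻¹ * 𝓕 g (ξ / (2 * Real.pi)) := by
  rw [fourierInt, Real.fourier_real_eq_integral_exp_smul]
  congr 2 with x
  rw [smul_eq_mul, show -2 * Real.pi * x * (ξ / (2 * Real.pi)) = -(ξ * x) by field_simp]
  push_cast
  ring_nf

lemma continuous_fourierInt (f : 𝓢(ℝ, ℂ)) : Continuous (fourierInt f) := by
  simp_rw [funext (fourierInt_eq_fourier f)]
  exact continuous_const.mul ((𝓕 f : 𝓢(ℝ, ℂ)).continuous.comp (by fun_prop))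

lemma norm_fourierInt_le (g : ℝ → ℂ) (ξ : ℝ) :
    ‖fourierInt g ξ‖ ≤ (Real.sqrt (2 * Real.pi))⁻¹ * ∫ x, ‖g x‖ := by
  rw [fourierInt, norm_mul, norm_inv, Complex.norm_real, Real.norm_of_nonneg (by positivity)]
  gcongr
  exact (norm_integral_le_integral_norm _).trans_eq (by simp [Complex.norm_exp])

lemma integrable_one_add_sq_mul_norm_comp_div (g : 𝓢(ℝ, ℂ)) {R : ℝ} (hR : R ≠ 0) :
    Integrable fun ξ : ℝ => (1 + ξ ^ 2) * ‖g (ξ / R)‖ := by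
  refine ((g.integrable.norm.add ((g.integrable_pow_mul volume 2).const_mul (R ^ 2))).comp_div
    hR).congr (ae_of_all _ fun ξ => ?_)
  simp only [Pi.add_apply, Real.norm_eq_abs, sq_abs]
  field_simp

lemma integrable_one_add_sq_mul_norm_fourierInt (f : 𝓢(ℝ, ℂ)) :
    Integrable fun ξ : ℝ => (1 + ξ ^ 2) * ‖fourierInt f ξ‖ := by
  have h2π : 2 * Real.pi ≠ 0 := by positivity
  refine ((integrable_one_add_sq_mul_norm_comp_div (𝓕 f) h2π).const_mul
    (Real.sqrt (2 * Real.pi))⁻¹).congr (ae_of_all _ fun ξ => ?_)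
  simp only [fourierInt_eq_fourier, norm_mul, norm_inv, Complex.norm_real,
    Real.norm_of_nonneg (Real.sqrt_nonneg _), SchwartzMap.fourier_coe]
  ring

lemma integrable_mul_fourierInt {ψ : ℝ → ℂ} {C : ℝ} (hψ : AEStronglyMeasurable ψ)
    (hC : ∀ ξ, ‖ψ ξ‖ ≤ C * (1 + ξ ^ 2)) (f : 𝓢(ℝ, ℂ)) :
    Integrable fun ξ => ψ ξ * fourierInt f ξ :=
  ((integrable_one_add_sq_mul_norm_fourierInt f).const_mul C).mono'
    (hψ.mul (continuous_fourierInt f).aestronglyMeasurable) <| ae_of_all _ fun ξ => by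
      rw [norm_mul, ← mul_assoc]
      gcongr
      exact hC ξ

noncomputable def fourierInvInt (h : ℝ → ℂ) (x : ℝ) : ℂ :=
  (Real.sqrt (2 * Real.pi) : ℂ)⁻¹ * ∫ ξ : ℝ, Complex.exp (Complex.I * ξ * x) * h ξ

lemma norm_fourierInvInt_le (h : ℝ → ℂ) (x : ℝ) :
    ‖fourierInvInt h x‖ ≤ (Real.sqrt (2 * Real.pi))⁻¹ * ∫ ξ, ‖h ξ‖ := by
  rw [fourierInvInt, norm_mul, norm_inv, Complex.norm_real, Real.norm_of_nonneg (by positivity)]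
  gcongr
  exact (norm_integral_le_integral_norm _).trans_eq (by simp [Complex.norm_exp])

lemma continuous_fourierInvInt {h : ℝ → ℂ} (hh : Integrable h) : Continuous (fourierInvInt h) :=
  continuous_const.mul <| continuous_of_dominated
    (fun x => (by fun_prop : Continuous fun ξ : ℝ => Complex.exp (Complex.I * ξ * x))
      |>.aestronglyMeasurable.mul hh.aestronglyMeasurable)
    (fun x => ae_of_all _ fun ξ => by simp [Complex.norm_exp]) hh.norm
    (ae_of_all _ fun ξ => by fun_prop)

lemma integrable_fourierInvInt_mul {g h : ℝ → ℂ} (hh : Integrable h) (hg : Integrable g) :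
    Integrable fun x => fourierInvInt h x * g x :=
  hg.bdd_mul (continuous_fourierInvInt hh).aestronglyMeasurable
    (ae_of_all _ (norm_fourierInvInt_le h))

lemma integral_fourierInvInt_mul_conj {g h : ℝ → ℂ} (hg : Integrable g) (hh : Integrable h) :
    ∫ x, fourierInvInt h x * conj (g x) = ∫ ξ, h ξ * conj (fourierInt g ξ) := by
  set c : ℂ := (Real.sqrt (2 * Real.pi) : ℂ)
  have hprod : Integrable (Function.uncurry fun x ξ : ℝ =>
      Complex.exp (Complex.I * ξ * x) * h ξ * conj (g x)) (volume.prod volume) :=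
    (((integrable_conj hg).mul_prod hh).bdd_mul (c := 1)
      (Continuous.aestronglyMeasurable (by fun_prop :
        Continuous fun z : ℝ × ℝ => Complex.exp (Complex.I * z.2 * z.1)))
      (ae_of_all _ fun z => by simp [Complex.norm_exp])).congr
      (ae_of_all _ fun z => by simp only [Function.uncurry]; ring)
  have hinner (ξ : ℝ) : ∫ x : ℝ, Complex.exp (Complex.I * ξ * x) * h ξ * conj (g x) =
      h ξ * conj (∫ x : ℝ, Complex.exp (-Complex.I * ξ * x) * g x) := by
    rw [← integral_conj, ← integral_const_mul]
    congr 1; ext x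
    rw [map_mul, ← Complex.exp_conj]
    simp only [map_mul, map_neg, Complex.conj_I, Complex.conj_ofReal, neg_neg]
    ring
  calc ∫ x, fourierInvInt h x * conj (g x)
      = ∫ x : ℝ, c⁻¹ * ∫ ξ : ℝ, Complex.exp (Complex.I * ξ * x) * h ξ * conj (g x) := by
        congr 1 with x
        rw [fourierInvInt, mul_assoc, ← integral_mul_const]
    _ = c⁻¹ * ∫ ξ : ℝ, ∫ x : ℝ, Complex.exp (Complex.I * ξ * x) * h ξ * conj (g x) := by
        rw [integral_const_mul, integral_integral_swap hprod]
    _ = ∫ ξ, h ξ * conj (fourierInt g ξ) := by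
        simp_rw [hinner, fourierInt, map_mul, map_inv₀, Complex.conj_ofReal, ← integral_const_mul]
        congr 1 with ξ
        ring

theorem pdo_dissipative_on_schwartz_general
    (q b σsq : ℝ) (hq : 0 ≤ q) (hσ : 0 ≤ σsq)
    (μ : Measure ℝ)
    (hμ : ∫⁻ y : ℝ, ENNReal.ofReal (min (y ^ 2) 1) ∂μ ≠ ⊤)
    (ψ : ℝ → ℂ)
    (hψ : ∀ ξ : ℝ, ψ ξ = (q : ℂ) - Complex.I * b * ξ + σsq * ξ ^ 2 +
      ∫ y : ℝ, (1 - Complex.exp (Complex.I * ξ * y) +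
        Set.indicator {y : ℝ | |y| ≤ 1} (fun y : ℝ => Complex.I * ξ * y) y) ∂μ)
    (f : SchwartzMap ℝ ℂ)
    (A : ℝ → ℂ)
    (hA : ∀ x : ℝ, A x = -(Real.exp (-x) : ℂ) * (Real.sqrt (2 * Real.pi) : ℂ)⁻¹ *
      ∫ ξ : ℝ, Complex.exp (Complex.I * ξ * x) * ψ ξ * fourierInt (⇑f) ξ) :
    Integrable (fun x : ℝ => A x * (starRingEnd ℂ) (f x) * (Real.exp x : ℂ)) ∧
    (∫ x : ℝ, A x * (starRingEnd ℂ) (f x) * (Real.exp x : ℂ)).re ≤ 0 := by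
  obtain rfl : ψ = levyKhintchineSymbol q b σsq μ := funext hψ
  have hμ' := integrable_min_sq_one hμ
  set h : ℝ → ℂ := fun ξ => levyKhintchineSymbol q b σsq μ ξ * fourierInt f ξ
  have hh : Integrable h := integrable_mul_fourierInt
    (continuous_levyKhintchineSymbol q b σsq hμ').aestronglyMeasurable
    (norm_levyKhintchineSymbol_le q b σsq hμ') f
  have hA' (x : ℝ) : A x = -(Real.exp (-x) : ℂ) * fourierInvInt h x := by
    simp_rw [hA, fourierInvInt, h, mul_assoc]
  have hAf (x : ℝ) :
      A x * conj (f x) * (Real.exp x : ℂ) = -(fourierInvInt h x * conj (f x)) := by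
    have hexp : (Real.exp (-x) : ℂ) * Real.exp x = 1 := by
      rw [← Complex.ofReal_mul, ← Real.exp_add, neg_add_cancel, Real.exp_zero, Complex.ofReal_one]
    rw [hA']
    linear_combination -(fourierInvInt h x * conj (f x)) * hexp
  simp_rw [hAf]
  refine ⟨(integrable_fourierInvInt_mul hh (integrable_conj f.integrable)).neg, ?_⟩
  rw [integral_neg, integral_fourierInvInt_mul_conj f.integrable hh, Complex.neg_re, neg_nonpos]
  exact re_integral_mul_mul_conj_nonneg
    (hh.mul_bdd (Complex.continuous_conj.comp (continuous_fourierInt f)).aestronglyMeasurable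
      (ae_of_all _ fun ξ => (RCLike.norm_conj _).trans_le (norm_fourierInt_le f ξ)))
    (re_levyKhintchineSymbol_nonneg b hq hσ hμ')

/-- Let `ψ` be a continuous negative definite function in
Lévy–Khintchine form with characteristics `(q, b, σ², μ)`, and for a Schwartz function `f`
let `A f (x) = −e^{-x} (2π)^{-1/2} ∫ e^{iξx} ψ(ξ) 𝓕f(ξ) dξ`.  Then
`x ↦ A f (x) ⬝ conj (f x) ⬝ e^x` is integrable on `ℝ` and
`Re ∫ A f (x) ⬝ conj (f x) ⬝ e^x dx ≤ 0`: `A` is dissipative on Schwartz functions with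
respect to the `L²(ℝ,e)` inner product. -/
theorem pdo_dissipative_on_schwartz
    (q b σsq : ℝ) (hq : 0 ≤ q) (hσ : 0 ≤ σsq)
    (μ : Measure ℝ) (hμ0 : μ {0} = 0)
    (hμ : ∫⁻ y : ℝ, ENNReal.ofReal (min (y ^ 2) 1) ∂μ ≠ ⊤)
    (ψ : ℝ → ℂ)
    (hψ : ∀ ξ : ℝ, ψ ξ = (q : ℂ) - Complex.I * b * ξ + σsq * ξ ^ 2 +
      ∫ y : ℝ, (1 - Complex.exp (Complex.I * ξ * y) +
        Set.indicator {y : ℝ | |y| ≤ 1} (fun y : ℝ => Complex.I * ξ * y) y) ∂μ)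
    (f : SchwartzMap ℝ ℂ)
    (A : ℝ → ℂ)
    (hA : ∀ x : ℝ, A x = -(Real.exp (-x) : ℂ) * (Real.sqrt (2 * Real.pi) : ℂ)⁻¹ *
      ∫ ξ : ℝ, Complex.exp (Complex.I * ξ * x) * ψ ξ * fourierInt (⇑f) ξ) :
    Integrable (fun x : ℝ => A x * (starRingEnd ℂ) (f x) * (Real.exp x : ℂ)) ∧
    (∫ x : ℝ, A x * (starRingEnd ℂ) (f x) * (Real.exp x : ℂ)).re ≤ 0 :=
  pdo_dissipative_on_schwartz_general q b σsq hq hσ μ hμ ψ hψ f A hA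
end

section
/- For every real a ≥ 1 and every b ∈ ℝ, the complex Gamma function satisfies |Γ(a+ib)| ≥ Γ(a) / (cosh(πb))^{1/2}. -/
/-!
By Euler's limit formula, `Γ(x) / |Γ(x + ib)|` is the limit of the products
`∏_{j ≤ n} |x + j + ib| / (x + j) = ∏_{j ≤ n} (1 + b² / (x + j)²)^{1/2}`, each factor of which
decreases in `x > 0`; hence so does the ratio. At `x = 1/2` the reflection formula together with
`Γ(1/2 - ib) = conj Γ(1/2 + ib)` gives `|Γ(1/2 + ib)|² = π / cosh(πb)`, so the ratio equals
`(cosh πb)^{1/2}` there, and it is at most that for every `a ≥ 1/2`.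
-/

open Complex ComplexConjugate Filter Finset Topology

lemma norm_ofReal_add_mul_I_div_le {x y : ℝ} (b : ℝ) (hx : 0 < x) (hxy : x ≤ y) :
    ‖(y : ℂ) + b * I‖ / y ≤ ‖(x : ℂ) + b * I‖ / x := by
  have hy : 0 < y := hx.trans_le hxy
  rw [div_le_div_iff₀ hy hx, norm_add_mul_I, norm_add_mul_I]
  calc √(y ^ 2 + b ^ 2) * x = √((y ^ 2 + b ^ 2) * x ^ 2) := by
        rw [Real.sqrt_mul' _ (sq_nonneg x), Real.sqrt_sq hx.le]
    _ ≤ √((x ^ 2 + b ^ 2) * y ^ 2) :=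
        Real.sqrt_le_sqrt (by nlinarith [mul_le_mul hxy hxy hx.le hy.le, sq_nonneg b])
    _ = √(x ^ 2 + b ^ 2) * y := by rw [Real.sqrt_mul' _ (sq_nonneg y), Real.sqrt_sq hy.le]

lemma GammaSeq_div_norm_GammaSeq_add_mul_I {x : ℝ} (b : ℝ) (hx : 0 < x) {n : ℕ} (hn : n ≠ 0) :
    Real.GammaSeq x n / ‖GammaSeq (x + b * I) n‖ =
      ∏ j ∈ range (n + 1), ‖((x + j : ℝ) : ℂ) + b * I‖ / (x + j) := by
  have hnx : (0 : ℝ) < (n : ℝ) ^ x * n.factorial := by positivity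
  have hprod : 0 < ∏ j ∈ range (n + 1), (x + j) := prod_pos fun j _ ↦ by positivity
  have hnorm_cpow : ‖(n : ℂ) ^ ((x : ℂ) + b * I)‖ = (n : ℝ) ^ x := by
    rw [← ofReal_natCast, norm_cpow_eq_rpow_re_of_pos (by positivity)]
    simp
  rw [Real.GammaSeq, GammaSeq, norm_div, norm_mul, norm_prod, hnorm_cpow, prod_div_distrib]
  simp only [norm_natCast, ofReal_add, ofReal_natCast, add_right_comm (x : ℂ)]
  field_simp

lemma tendsto_GammaSeq_div_norm_GammaSeq_add_mul_I {x : ℝ} (b : ℝ) (hx : 0 < x) :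
    Tendsto (fun n ↦ Real.GammaSeq x n / ‖GammaSeq (x + b * I) n‖) atTop
      (𝓝 (Real.Gamma x / ‖Gamma (x + b * I)‖)) :=
  (Real.GammaSeq_tendsto_Gamma x).div (GammaSeq_tendsto_Gamma _).norm
    (norm_ne_zero_iff.mpr (Gamma_ne_zero_of_re_pos (by simpa using hx)))

lemma Gamma_div_norm_Gamma_add_mul_I_le {x y : ℝ} (b : ℝ) (hx : 0 < x) (hxy : x ≤ y) :
    Real.Gamma y / ‖Gamma (y + b * I)‖ ≤ Real.Gamma x / ‖Gamma (x + b * I)‖ := by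
  have hy : 0 < y := hx.trans_le hxy
  refine le_of_tendsto_of_tendsto (tendsto_GammaSeq_div_norm_GammaSeq_add_mul_I b hy)
    (tendsto_GammaSeq_div_norm_GammaSeq_add_mul_I b hx) ?_
  filter_upwards [eventually_ne_atTop 0] with n hn
  rw [GammaSeq_div_norm_GammaSeq_add_mul_I b hy hn, GammaSeq_div_norm_GammaSeq_add_mul_I b hx hn]
  refine prod_le_prod (fun j _ ↦ by positivity) fun j _ ↦ ?_
  exact norm_ofReal_add_mul_I_div_le b (by positivity) (by linarith)

lemma norm_Gamma_one_half_add_mul_I_sq (b : ℝ) :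
    ‖Gamma ((1 / 2 : ℝ) + b * I)‖ ^ 2 = Real.pi / Real.cosh (Real.pi * b) := by
  set s : ℂ := (1 / 2 : ℝ) + b * I
  have hreflect : 1 - s = conj s := by
    norm_num [s, Complex.ext_iff]
  have hsin : sin (Real.pi * s) = Real.cosh (Real.pi * b) := by
    have : (Real.pi : ℂ) * s = (Real.pi / 2 : ℝ) + (Real.pi * b : ℝ) * I := by
      simp only [s]; push_cast; ring
    rw [this, sin_add, cos_mul_I, sin_mul_I, ← ofReal_cos, ← ofReal_sin, Real.cos_pi_div_two,
      Real.sin_pi_div_two]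
    simp
  have h := Gamma_mul_Gamma_one_sub s
  rw [hreflect, Gamma_conj, mul_conj, normSq_eq_norm_sq, hsin] at h
  exact_mod_cast h

lemma Gamma_one_half_div_norm_Gamma_add_mul_I (b : ℝ) :
    Real.Gamma (1 / 2) / ‖Gamma ((1 / 2 : ℝ) + b * I)‖ = Real.sqrt (Real.cosh (Real.pi * b)) := by
  rw [← Real.sqrt_sq (norm_nonneg _), norm_Gamma_one_half_add_mul_I_sq, Real.Gamma_one_half_eq,
    ← Real.sqrt_div Real.pi_pos.le, div_div_cancel₀ Real.pi_pos.ne']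

/-- For every real `a ≥ 1` and every `b ∈ ℝ`, the complex Gamma
function satisfies `|Γ(a+ib)| ≥ Γ(a) / (cosh (π b))^{1/2}`. -/
theorem gamma_abs_lower_bound (a b : ℝ) (ha : 1 ≤ a) :
    Real.Gamma a / Real.sqrt (Real.cosh (Real.pi * b)) ≤
      ‖Complex.Gamma ((a : ℂ) + (b : ℂ) * Complex.I)‖ := by
  have hratio := Gamma_div_norm_Gamma_add_mul_I_le b one_half_pos (by linarith : (1 / 2 : ℝ) ≤ a)
  rw [Gamma_one_half_div_norm_Gamma_add_mul_I,
    div_le_iff₀ (norm_pos_iff.mpr (Gamma_ne_zero_of_re_pos (by simp; linarith)))] at hratio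
  rwa [div_le_iff₀' (Real.sqrt_pos.mpr (Real.cosh_pos _))]
end
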